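/- In the exact completion C_ex of a weakly lex Pos-enriched category C, effective epimorphisms are stable under pullback: the pullback of an effective epimorphism along any morphism is again an effective epimorphism. -/

import Mathlib

open CategoryTheory

universe w v u v' u' v'' u''

/-- A `Pos`-enriched category: each hom-set carries a partial order and
composition is monotone in both variables. -/
class PosEnriched (C : Type u) [Category.{v} C] where
  homOrder : ∀ X Y : C, PartialOrder (X ⟶ Y)
  comp_mono : ∀ {X Y Z : C} {f f' : X ⟶ Y} {g g' : Y ⟶ Z},
    (homOrder X Y).le f f' → (homOrder Y Z).le g g' → (homOrder X Z).le (f ≫ g) (f' ≫ g')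

attribute [instance] PosEnriched.homOrder

namespace PosEnr

variable {C : Type u} [Category.{v} C] [PosEnriched C]

theorem comp_mono' {X Y Z : C} {f f' : X ⟶ Y} {g g' : Y ⟶ Z} (h : f ≤ f') (h' : g ≤ g') :
    f ≫ g ≤ f' ≫ g' := PosEnriched.comp_mono h h'

/-- `m` is an order-monomorphism (ff-morphism): postcomposition reflects the order
(hence, by antisymmetry, is also injective). -/
def OrderMono {X Y : C} (m : X ⟶ Y) : Prop :=
  ∀ {Z : C} (u v : Z ⟶ X), u ≫ m ≤ v ≫ m → u ≤ v

/-- `e` is an so-morphism: it is left orthogonal, in the `Pos`-enriched sense, to all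
order-monomorphisms (the relevant square of hom-posets is a pullback in `Pos`). -/
def IsSo {A B : C} (e : A ⟶ B) : Prop :=
  ∀ {X Y : C} (m : X ⟶ Y), OrderMono m →
    (∀ (f : A ⟶ X) (g : B ⟶ Y), f ≫ m = e ≫ g → ∃ h : B ⟶ X, e ≫ h = f ∧ h ≫ m = g) ∧
    (∀ h h' : B ⟶ X, e ≫ h ≤ e ≫ h' → h ≫ m ≤ h' ≫ m → h ≤ h')

/-- `e : I ⟶ X` is the (conical, `Pos`-enriched) inserter of the ordered pair `(f, g)`. -/
def IsInserterP {X Y I : C} (f g : X ⟶ Y) (e : I ⟶ X) : Prop :=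
  e ≫ f ≤ e ≫ g ∧
  (∀ {Z : C} (h : Z ⟶ X), h ≫ f ≤ h ≫ g → ∃ u : Z ⟶ I, u ≫ e = h) ∧
  OrderMono e

/-- A weak inserter: only the existence part of the universal property. -/
def IsWeakInserter {X Y I : C} (f g : X ⟶ Y) (e : I ⟶ X) : Prop :=
  e ≫ f ≤ e ≫ g ∧
  (∀ {Z : C} (h : Z ⟶ X), h ≫ f ≤ h ≫ g → ∃ u : Z ⟶ I, u ≫ e = h)

/-- `q : Y ⟶ Q` is the coinserter of the ordered pair `(u, v)`. -/
def IsCoinserterP {X Y Q : C} (u v : X ⟶ Y) (q : Y ⟶ Q) : Prop :=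
  u ≫ q ≤ v ≫ q ∧
  (∀ {Z : C} (h : Y ⟶ Z), u ≫ h ≤ v ≫ h → ∃ t : Q ⟶ Z, q ≫ t = h) ∧
  (∀ {Z : C} (h h' : Q ⟶ Z), q ≫ h ≤ q ≫ h' → h ≤ h')

/-- `(c0, c1)` is the comma object (lax pullback) of the ordered pair `(f, g)`. -/
def IsCommaP {X Y Z P : C} (f : X ⟶ Z) (g : Y ⟶ Z) (c0 : P ⟶ X) (c1 : P ⟶ Y) : Prop :=
  c0 ≫ f ≤ c1 ≫ g ∧
  (∀ {A : C} (u0 : A ⟶ X) (u1 : A ⟶ Y), u0 ≫ f ≤ u1 ≫ g →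
      ∃ w : A ⟶ P, w ≫ c0 = u0 ∧ w ≫ c1 = u1) ∧
  (∀ {A : C} (w w' : A ⟶ P), w ≫ c0 ≤ w' ≫ c0 → w ≫ c1 ≤ w' ≫ c1 → w ≤ w')

/-- An effective epimorphism: a coinserter of some pair. -/
def EffectiveEpiP {Y Q : C} (q : Y ⟶ Q) : Prop :=
  ∃ (X : C) (u v : X ⟶ Y), IsCoinserterP u v q

/-- Binary product in the `Pos`-enriched (conical) sense. -/
def IsBinProdP {X Y P : C} (p : P ⟶ X) (q : P ⟶ Y) : Prop :=
  (∀ {Z : C} (f : Z ⟶ X) (g : Z ⟶ Y), ∃ h : Z ⟶ P, h ≫ p = f ∧ h ≫ q = g) ∧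
  (∀ {Z : C} (h h' : Z ⟶ P), h ≫ p ≤ h' ≫ p → h ≫ q ≤ h' ≫ q → h ≤ h')

/-- Terminal object in the `Pos`-enriched sense. -/
def IsTerminalP (T : C) : Prop :=
  ∀ X : C, ∃ f : X ⟶ T, ∀ g : X ⟶ T, g = f

/-- Product of a (possibly infinite) family in the `Pos`-enriched sense. -/
def IsProdFamP {ι : Type w} (X : ι → C) (P : C) (p : ∀ i, P ⟶ X i) : Prop :=
  (∀ {Z : C} (f : ∀ i, Z ⟶ X i), ∃ h : Z ⟶ P, ∀ i, h ≫ p i = f i) ∧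
  (∀ {Z : C} (h h' : Z ⟶ P), (∀ i, h ≫ p i ≤ h' ≫ p i) → h ≤ h')

/-- Weak product of a family: only the existence part. -/
def IsWeakProdFam {ι : Type w} (X : ι → C) (P : C) (p : ∀ i, P ⟶ X i) : Prop :=
  ∀ {Z : C} (f : ∀ i, Z ⟶ X i), ∃ h : Z ⟶ P, ∀ i, h ≫ p i = f i

/-- Pullback in the `Pos`-enriched (conical) sense. -/
def IsPullbackP {X Y Z P : C} (f : X ⟶ Z) (g : Y ⟶ Z) (p0 : P ⟶ X) (p1 : P ⟶ Y) : Prop :=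
  p0 ≫ f = p1 ≫ g ∧
  (∀ {A : C} (u0 : A ⟶ X) (u1 : A ⟶ Y), u0 ≫ f = u1 ≫ g →
      ∃ w : A ⟶ P, w ≫ p0 = u0 ∧ w ≫ p1 = u1) ∧
  (∀ {A : C} (w w' : A ⟶ P), w ≫ p0 ≤ w' ≫ p0 → w ≫ p1 ≤ w' ≫ p1 → w ≤ w')

/-- A congruence, given by a jointly order-monic pair which is order-reflexive and
transitive (in terms of generalized elements). -/
def IsCongPair {S X : C} (s0 s1 : S ⟶ X) : Prop :=
  (∀ {A : C} (u v : A ⟶ S), u ≫ s0 ≤ v ≫ s0 → u ≫ s1 ≤ v ≫ s1 → u ≤ v) ∧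
  (∀ {A : C} (a0 a1 : A ⟶ X), a0 ≤ a1 → ∃ u : A ⟶ S, u ≫ s0 = a0 ∧ u ≫ s1 = a1) ∧
  (∀ {A : C} (u v : A ⟶ S), u ≫ s1 = v ≫ s0 →
      ∃ t : A ⟶ S, t ≫ s0 = u ≫ s0 ∧ t ≫ s1 = v ≫ s1)

/-- An so-projective object: its covariant hom-functor to `Pos` preserves so-morphisms
(equivalently, sends them to surjections). -/
def SoProjective (P : C) : Prop :=
  ∀ {A B : C} (e : A ⟶ B), IsSo e → ∀ f : P ⟶ B, ∃ g : P ⟶ A, g ≫ e = f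

end PosEnr

/-- A weight `W : D ⥤ Pos` for `Pos`-enriched weighted limits, given concretely. -/
structure PosWeight (D : Type u') [Category.{v'} D] [PosEnriched D] where
  obj : D → Type
  po : ∀ d, PartialOrder (obj d)
  map : ∀ {d d' : D}, (d ⟶ d') → obj d → obj d'
  map_monotone : ∀ {d d' : D} (f : d ⟶ d') (x y : obj d),
    (po d).le x y → (po d').le (map f x) (map f y)
  map_id : ∀ (d : D) (x : obj d), map (𝟙 d) x = x
  map_comp : ∀ {d d' d'' : D} (f : d ⟶ d') (g : d' ⟶ d'') (x : obj d),
    map (f ≫ g) x = map g (map f x)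
  map_le : ∀ {d d' : D} {f g : d ⟶ d'}, f ≤ g → ∀ x : obj d, (po d').le (map f x) (map g x)

attribute [instance] PosWeight.po

/-- A finite weight: finitely many objects, finite hom-posets, finite values. -/
def PosWeight.IsFiniteWeight {D : Type u'} [Category.{v'} D] [PosEnriched D]
    (W : PosWeight D) : Prop :=
  Finite D ∧ (∀ d d' : D, Finite (d ⟶ d')) ∧ ∀ d, Finite (W.obj d)

/-- A `Pos`-enriched (locally monotone) functor. -/
structure PosFunctor (C : Type u) (E : Type u') [Category.{v} C] [Category.{v'} E]
    [PosEnriched C] [PosEnriched E] where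
  toFunctor : C ⥤ E
  map_le : ∀ {X Y : C} {f g : X ⟶ Y}, f ≤ g → toFunctor.map f ≤ toFunctor.map g

/-- Composition of `Pos`-enriched functors. -/
def PosFunctor.comp {D : Type u''} {C : Type u} {E : Type u'}
    [Category.{v''} D] [Category.{v} C] [Category.{v'} E]
    [PosEnriched D] [PosEnriched C] [PosEnriched E]
    (G : PosFunctor D C) (F : PosFunctor C E) : PosFunctor D E where
  toFunctor := G.toFunctor ⋙ F.toFunctor
  map_le h := F.map_le (G.map_le h)

/-- A cylinder (`Pos`-natural transformation) `W ⟶ C(L, F-)`. -/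
structure Cylinder {D : Type u'} [Category.{v'} D] [PosEnriched D] (W : PosWeight D)
    {E : Type u} [Category.{v} E] [PosEnriched E] (F : PosFunctor D E) (L : E) where
  app : ∀ d : D, W.obj d → (L ⟶ F.toFunctor.obj d)
  monotone : ∀ (d : D) (x y : W.obj d), (W.po d).le x y → app d x ≤ app d y
  naturality : ∀ {d d' : D} (f : d ⟶ d') (x : W.obj d),
    app d x ≫ F.toFunctor.map f = app d' (W.map f x)

/-- The image of a cylinder under a `Pos`-enriched functor. -/
def Cylinder.mapF {D : Type u''} {C : Type u} {E : Type u'}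
    [Category.{v''} D] [Category.{v} C] [Category.{v'} E]
    [PosEnriched D] [PosEnriched C] [PosEnriched E]
    {W : PosWeight D} {G : PosFunctor D C} {L : C}
    (F : PosFunctor C E) (c : Cylinder W G L) :
    Cylinder W (G.comp F) (F.toFunctor.obj L) where
  app d x := F.toFunctor.map (c.app d x)
  monotone d x y h := F.map_le (c.monotone d x y h)
  naturality f x := by
    show F.toFunctor.map _ ≫ F.toFunctor.map _ = _
    rw [← F.toFunctor.map_comp, c.naturality]

/-- `L` with cylinder `c` is a weak `W`-weighted limit of `F`:
the induced comparison maps on hom-posets are surjective. -/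
def IsWeakWeightedLimitP {D : Type u'} [Category.{v'} D] [PosEnriched D] (W : PosWeight D)
    {E : Type u} [Category.{v} E] [PosEnriched E] (F : PosFunctor D E)
    (L : E) (c : Cylinder W F L) : Prop :=
  ∀ (Z : E) (φ : Cylinder W F Z), ∃ h : Z ⟶ L, ∀ (d : D) (x : W.obj d),
    h ≫ c.app d x = φ.app d x

/-- `L` with cylinder `c` is a (strong) `W`-weighted limit of `F`. -/
def IsWeightedLimitP {D : Type u'} [Category.{v'} D] [PosEnriched D] (W : PosWeight D)
    {E : Type u} [Category.{v} E] [PosEnriched E] (F : PosFunctor D E)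
    (L : E) (c : Cylinder W F L) : Prop :=
  IsWeakWeightedLimitP W F L c ∧
  ∀ (Z : E) (h h' : Z ⟶ L), (∀ (d : D) (x : W.obj d), h ≫ c.app d x ≤ h' ≫ c.app d x) → h ≤ h'

/-- A weakly lex `Pos`-category: all weak finite weighted limits exist. -/
def WeaklyLex (C : Type u) [Category.{v} C] [PosEnriched C] : Prop :=
  ∀ (D : Type) [SmallCategory D] [PosEnriched D] (W : PosWeight D) (F : PosFunctor D C),
    W.IsFiniteWeight → ∃ (L : C) (c : Cylinder W F L), IsWeakWeightedLimitP W F L c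

/-- All finite weighted limits exist (in the strong sense). -/
def HasFiniteWeightedLimitsP (C : Type u) [Category.{v} C] [PosEnriched C] : Prop :=
  ∀ (D : Type) [SmallCategory D] [PosEnriched D] (W : PosWeight D) (F : PosFunctor D C),
    W.IsFiniteWeight → ∃ (L : C) (c : Cylinder W F L), IsWeightedLimitP W F L c

open PosEnr

/-- A regular `Pos`-enriched category. -/
def IsRegularCat (C : Type u) [Category.{v} C] [PosEnriched C] : Prop :=
  HasFiniteWeightedLimitsP C ∧
  (∀ {X Y : C} (f : X ⟶ Y), ∃ (I : C) (e : X ⟶ I) (m : I ⟶ Y),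
      IsSo e ∧ OrderMono m ∧ e ≫ m = f) ∧
  (∀ {X Y Z P : C} (f : X ⟶ Z) (g : Y ⟶ Z) (p0 : P ⟶ X) (p1 : P ⟶ Y),
      IsPullbackP f g p0 p1 → IsSo f → IsSo p1)

/-- An exact `Pos`-enriched category: regular, and every congruence is effective,
i.e. is the kernel congruence (comma object `q/q`) of some morphism. -/
def IsExactCat (C : Type u) [Category.{v} C] [PosEnriched C] : Prop :=
  IsRegularCat C ∧
  ∀ {S X : C} (s0 s1 : S ⟶ X), IsCongPair s0 s1 →
    ∃ (Q : C) (q : X ⟶ Q), IsCommaP q q s0 s1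

/-- Fully order-faithful: full and order-reflecting (hence faithful) on hom-posets. -/
def FullyOrderFaithful {C : Type u} {E : Type u'} [Category.{v} C] [Category.{v'} E]
    [PosEnriched C] [PosEnriched E] (F : PosFunctor C E) : Prop :=
  (∀ {X Y : C} (g : F.toFunctor.obj X ⟶ F.toFunctor.obj Y), ∃ f : X ⟶ Y, F.toFunctor.map f = g) ∧
  (∀ {X Y : C} (f g : X ⟶ Y), F.toFunctor.map f ≤ F.toFunctor.map g → f ≤ g)

/-- An equivalence of `Pos`-enriched categories. -/
def IsEquivP {C : Type u} {E : Type u'} [Category.{v} C] [Category.{v'} E]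
    [PosEnriched C] [PosEnriched E] (F : PosFunctor C E) : Prop :=
  FullyOrderFaithful F ∧ ∀ Y : E, ∃ X : C, Nonempty (F.toFunctor.obj X ≅ Y)

/-- Preservation of all finite weighted limits by a `Pos`-enriched functor. -/
def PreservesFiniteWeightedLimitsP {C : Type u} {E : Type u'} [Category.{v} C] [Category.{v'} E]
    [PosEnriched C] [PosEnriched E] (F : PosFunctor C E) : Prop :=
  ∀ (D : Type) [SmallCategory D] [PosEnriched D] (W : PosWeight D), W.IsFiniteWeight →
    ∀ (G : PosFunctor D C) (L : C) (c : Cylinder W G L),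
      IsWeightedLimitP W G L c →
      IsWeightedLimitP W (G.comp F) (F.toFunctor.obj L) (c.mapF F)

/-- A regular `Pos`-enriched functor: preserves finite weighted limits and effective
epimorphisms. -/
def IsRegularFunctor {C : Type u} {E : Type u'} [Category.{v} C] [Category.{v'} E]
    [PosEnriched C] [PosEnriched E] (F : PosFunctor C E) : Prop :=
  PreservesFiniteWeightedLimitsP F ∧
  ∀ {X Y : C} (e : X ⟶ Y), EffectiveEpiP e → EffectiveEpiP (F.toFunctor.map e)

/-- A left covering functor: for every weak finite weighted limit in the domain, any
comparison morphism into the corresponding (strong) limit in the codomain is an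
effective epimorphism. -/
def LeftCovering {C : Type u} {E : Type u'} [Category.{v} C] [Category.{v'} E]
    [PosEnriched C] [PosEnriched E] (F : PosFunctor C E) : Prop :=
  ∀ (D : Type) [SmallCategory D] [PosEnriched D] (W : PosWeight D), W.IsFiniteWeight →
    ∀ (G : PosFunctor D C) (L : C) (c : Cylinder W G L), IsWeakWeightedLimitP W G L c →
    ∀ (L' : E) (c' : Cylinder W (G.comp F) L'), IsWeightedLimitP W (G.comp F) L' c' →
    ∀ h : F.toFunctor.obj L ⟶ L', (∀ (d : D) (x : W.obj d),
        h ≫ c'.app d x = F.toFunctor.map (c.app d x)) →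
      EffectiveEpiP h

/-- The full subcategory of a `Pos`-enriched category is `Pos`-enriched. -/
instance fullSubPosEnriched {C : Type u} [Category.{v} C] [PosEnriched C] (Z : C → Prop) :
    PosEnriched (ObjectProperty.FullSubcategory Z) where
  homOrder X Y := @PartialOrder.lift _ _ (PosEnriched.homOrder X.obj Y.obj)
    (fun f => f.hom) (fun _ _ h => InducedCategory.hom_ext h)
  comp_mono h h' := PosEnriched.comp_mono h h'

/-! ## The exact completion -/

open PosEnr

/-- A pseudocongruence in a `Pos`-enriched category: an order-reflexive and transitive
parallel pair. These are the objects of the exact completion. -/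
structure ExObj (C : Type u) [Category.{v} C] [PosEnriched C] where
  X : C
  R : C
  r0 : R ⟶ X
  r1 : R ⟶ X
  orefl : ∀ {A : C} (a0 a1 : A ⟶ X), a0 ≤ a1 → ∃ u : A ⟶ R, u ≫ r0 = a0 ∧ u ≫ r1 = a1
  tra : ∀ {A : C} (u v : A ⟶ R), u ≫ r1 = v ≫ r0 →
    ∃ t : A ⟶ R, t ≫ r0 = u ≫ r0 ∧ t ≫ r1 = v ≫ r1

namespace ExObj

variable {C : Type u} [Category.{v} C] [PosEnriched C]

/-- `f : X ⟶ Y` is compatible from `(X,R)` to `(Y,S)`. -/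
def Compat (A B : ExObj C) (f : A.X ⟶ B.X) : Prop :=
  ∃ fb : A.R ⟶ B.R, fb ≫ B.r0 = A.r0 ≫ f ∧ fb ≫ B.r1 = A.r1 ≫ f

/-- The preorder `f ≼ g` on compatible morphisms, given by factoring `(f,g)` through
the codomain pseudocongruence. -/
def Pre (A B : ExObj C) (f g : A.X ⟶ B.X) : Prop :=
  ∃ s : A.X ⟶ B.R, s ≫ B.r0 = f ∧ s ≫ B.r1 = g

theorem Pre.refl (A B : ExObj C) (f : A.X ⟶ B.X) : Pre A B f f := by
  obtain ⟨u, h0, h1⟩ := B.orefl f f le_rfl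
  exact ⟨u, h0, h1⟩

theorem Pre.trans' {A B : ExObj C} {f g h : A.X ⟶ B.X}
    (h1 : Pre A B f g) (h2 : Pre A B g h) : Pre A B f h := by
  obtain ⟨s, hs0, hs1⟩ := h1
  obtain ⟨t, ht0, ht1⟩ := h2
  obtain ⟨w, hw0, hw1⟩ := B.tra s t (by rw [hs1, ht0])
  exact ⟨w, by rw [hw0, hs0], by rw [hw1, ht1]⟩

theorem Compat.comp {A B D : ExObj C} {f : A.X ⟶ B.X} {g : B.X ⟶ D.X}
    (hf : Compat A B f) (hg : Compat B D g) : Compat A D (f ≫ g) := by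
  obtain ⟨fb, h0, h1⟩ := hf
  obtain ⟨gb, k0, k1⟩ := hg
  refine ⟨fb ≫ gb, ?_, ?_⟩
  · rw [Category.assoc, k0, ← Category.assoc, h0, Category.assoc]
  · rw [Category.assoc, k1, ← Category.assoc, h1, Category.assoc]

theorem Pre.comp_left {A B D : ExObj C} {f f' : A.X ⟶ B.X} (g : B.X ⟶ D.X)
    (hg : Compat B D g) (h : Pre A B f f') : Pre A D (f ≫ g) (f' ≫ g) := by
  obtain ⟨s, hs0, hs1⟩ := h
  obtain ⟨gb, k0, k1⟩ := hg
  refine ⟨s ≫ gb, ?_, ?_⟩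
  · rw [Category.assoc, k0, ← Category.assoc, hs0]
  · rw [Category.assoc, k1, ← Category.assoc, hs1]

theorem Pre.comp_right {A B D : ExObj C} (f : A.X ⟶ B.X) {g g' : B.X ⟶ D.X}
    (h : Pre B D g g') : Pre A D (f ≫ g) (f ≫ g') := by
  obtain ⟨s, hs0, hs1⟩ := h
  exact ⟨f ≫ s, by rw [Category.assoc, hs0], by rw [Category.assoc, hs1]⟩

theorem Pre.compCongr {A B D : ExObj C} {f f' : A.X ⟶ B.X} {g g' : B.X ⟶ D.X}
    (hg : Compat B D g) (h1 : Pre A B f f') (h2 : Pre B D g g') :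
    Pre A D (f ≫ g) (f' ≫ g') :=
  (Pre.comp_left g hg h1).trans' (Pre.comp_right f' h2)

/-- The equivalence relation on compatible morphisms. -/
def exSetoid (A B : ExObj C) : Setoid {f : A.X ⟶ B.X // Compat A B f} where
  r f g := Pre A B f.1 g.1 ∧ Pre A B g.1 f.1
  iseqv := ⟨fun f => ⟨Pre.refl A B f.1, Pre.refl A B f.1⟩, fun h => ⟨h.2, h.1⟩,
    fun h1 h2 => ⟨h1.1.trans' h2.1, h2.2.trans' h1.2⟩⟩

/-- The exact completion `C_ex` as a category: objects are pseudocongruences, morphisms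
are equivalence classes of compatible morphisms. -/
instance exCategory : Category (ExObj C) where
  Hom A B := Quotient (exSetoid A B)
  id A := Quotient.mk _ ⟨𝟙 A.X, ⟨𝟙 A.R, by simp, by simp⟩⟩
  comp {A B D} f g :=
    Quotient.liftOn₂ f g (fun f g => Quotient.mk _ ⟨f.1 ≫ g.1, f.2.comp g.2⟩)
      (fun a b a' b' ha hb => Quotient.sound
        ⟨Pre.compCongr b.2 ha.1 hb.1, Pre.compCongr b'.2 ha.2 hb.2⟩)
  id_comp {A B} f := Quotient.inductionOn f fun f => Quotient.sound (by
    constructor <;> · simp only [Category.id_comp]; exact Pre.refl A B f.1)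
  comp_id {A B} f := Quotient.inductionOn f fun f => Quotient.sound (by
    constructor <;> · simp only [Category.comp_id]; exact Pre.refl A B f.1)
  assoc {A B D E} f g h := Quotient.inductionOn₃ f g h fun f g h => Quotient.sound (by
    constructor <;> · simp only [Category.assoc]; exact Pre.refl A E _)

/-- The `Pos`-enrichment of the exact completion. -/
instance exPosEnriched : PosEnriched (ExObj C) where
  homOrder A B :=
    { le := fun f g => Quotient.liftOn₂ f g (fun f g => Pre A B f.1 g.1)
        (fun a b a' b' ha hb => propext
          ⟨fun h => (ha.2.trans' h).trans' hb.1, fun h => (ha.1.trans' h).trans' hb.2⟩)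
      le_refl := fun f => Quotient.inductionOn f fun f => Pre.refl A B f.1
      le_trans := fun f g h => Quotient.inductionOn₃ f g h
        (fun f g h h1 h2 => Pre.trans' h1 h2)
      le_antisymm := fun f g => Quotient.inductionOn₂ f g
        (fun f g h1 h2 => Quotient.sound ⟨h1, h2⟩) }
  comp_mono {A B D} {f f'} {g g'} h h' := by
    revert h h'
    refine Quotient.inductionOn₂ f f' (fun a a' => Quotient.inductionOn₂ g g'
      (fun b b' h h' => ?_))
    exact Pre.compCongr b.2 h h'

end ExObj

/-! ## The canonical embedding `Γ : C → C_ex` -/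

namespace ExObj

variable {C : Type u} [Category.{v} C] [PosEnriched C]

variable (I : C → C) (i0 i1 : ∀ X : C, I X ⟶ X)

/-- The pseudocongruence `(X, I_X)` associated to a chosen weak comma object `I_X` of
`(1_X, 1_X)`. -/
def commaExObj (hle : ∀ X, i0 X ≤ i1 X)
    (hfac : ∀ (X : C) {A : C} (a0 a1 : A ⟶ X), a0 ≤ a1 →
      ∃ u : A ⟶ I X, u ≫ i0 X = a0 ∧ u ≫ i1 X = a1) (X : C) : ExObj C where
  X := X
  R := I X
  r0 := i0 X
  r1 := i1 X
  orefl a0 a1 h := hfac X a0 a1 h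
  tra u v huv := by
    refine hfac X _ _ ?_
    calc u ≫ i0 X ≤ u ≫ i1 X := PosEnriched.comp_mono le_rfl (hle X)
      _ = v ≫ i0 X := huv
      _ ≤ v ≫ i1 X := PosEnriched.comp_mono le_rfl (hle X)

/-- The canonical functor `Γ : C → C_ex`, `X ↦ (X, I_X)`, `f ↦ [f]`. -/
def GammaFunc (hle : ∀ X, i0 X ≤ i1 X)
    (hfac : ∀ (X : C) {A : C} (a0 a1 : A ⟶ X), a0 ≤ a1 →
      ∃ u : A ⟶ I X, u ≫ i0 X = a0 ∧ u ≫ i1 X = a1) : C ⥤ ExObj C where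
  obj X := commaExObj I i0 i1 hle hfac X
  map {X Y} f := Quotient.mk _ ⟨f, by
    obtain ⟨u, h0, h1⟩ := hfac Y (i0 X ≫ f) (i1 X ≫ f)
      (PosEnriched.comp_mono (hle X) le_rfl)
    exact ⟨u, h0, h1⟩⟩
  map_id X := Quotient.sound (by
    constructor <;> exact Pre.refl _ _ _)
  map_comp f g := Quotient.sound (by
    constructor <;> exact Pre.refl _ _ _)

/-- The canonical quotient morphism `[1_X] : Γ X → (X, R)` in `C_ex`. -/
def exQuot (hle : ∀ X, i0 X ≤ i1 X)
    (hfac : ∀ (X : C) {A : C} (a0 a1 : A ⟶ X), a0 ≤ a1 →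
      ∃ u : A ⟶ I X, u ≫ i0 X = a0 ∧ u ≫ i1 X = a1) (A : ExObj C) :
    (GammaFunc I i0 i1 hle hfac).obj A.X ⟶ A :=
  Quotient.mk _ ⟨𝟙 A.X, by
    obtain ⟨u, h0, h1⟩ := A.orefl (i0 A.X) (i1 A.X) (hle A.X)
    exact ⟨u, by simpa [GammaFunc, commaExObj] using h0, by simpa [GammaFunc, commaExObj] using h1⟩⟩

end ExObj

/-!
An effective epimorphism `[f] : (X, R) ⟶ (Y, S)` of `C_ex` has a section `s : Y ⟶ X` in `C` up
to `S`: factor `[f]` as `[𝟙] : (X, R) ⟶ (X, f*S)` followed by `[f] : (X, f*S) ⟶ (Y, S)`; the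
first factor coinserts the same pair as `[f]`, so the coinserter property yields a section of the
second. Conversely, such a section makes `[f] : (X, f*S) ⟶ (Y, S)` an isomorphism, while
`[𝟙] : (X, R) ⟶ (X, f*S)` is always the coinserter of the two projections out of `Γ (f*S)`;
hence `[f]` is an effective epimorphism. Sections up to the relation pass to pullbacks because
the objects `Γ X` are projective.
-/

namespace PosEnr

variable {C : Type u} [Category.{v} C]

def SpanRel {S V W A : C} (r0 : S ⟶ V) (r1 : S ⟶ W) (a : A ⟶ V) (b : A ⟶ W) : Prop :=
  ∃ t : A ⟶ S, t ≫ r0 = a ∧ t ≫ r1 = b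

theorem SpanRel.precomp {S V W A A' : C} {r0 : S ⟶ V} {r1 : S ⟶ W} {a : A ⟶ V} {b : A ⟶ W}
    (h : SpanRel r0 r1 a b) (k : A' ⟶ A) : SpanRel r0 r1 (k ≫ a) (k ≫ b) := by
  obtain ⟨t, h0, h1⟩ := h
  exact ⟨k ≫ t, by rw [Category.assoc, h0], by rw [Category.assoc, h1]⟩

variable [PosEnriched C]

def IsWeakCommaP {X Y Z P : C} (f : X ⟶ Z) (g : Y ⟶ Z) (c0 : P ⟶ X) (c1 : P ⟶ Y) : Prop :=
  c0 ≫ f ≤ c1 ≫ g ∧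
    ∀ {A : C} (u0 : A ⟶ X) (u1 : A ⟶ Y), u0 ≫ f ≤ u1 ≫ g → SpanRel c0 c1 u0 u1

def IsWeakPullbackP {X Y Z P : C} (f : X ⟶ Z) (g : Y ⟶ Z) (p0 : P ⟶ X) (p1 : P ⟶ Y) :
    Prop :=
  p0 ≫ f = p1 ≫ g ∧
    ∀ {A : C} (u0 : A ⟶ X) (u1 : A ⟶ Y), u0 ≫ f = u1 ≫ g → SpanRel p0 p1 u0 u1

def IsWeakInverseImage {X V S L : C} (f : X ⟶ V) (r0 r1 : S ⟶ V) (l0 l1 : L ⟶ X) : Prop :=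
  SpanRel r0 r1 (l0 ≫ f) (l1 ≫ f) ∧
    ∀ {A : C} (a0 a1 : A ⟶ X), SpanRel r0 r1 (a0 ≫ f) (a1 ≫ f) → SpanRel l0 l1 a0 a1

theorem IsCoinserterP.exists_section_of_fac {X Y Q E : C} {u v : X ⟶ Y} {q : Y ⟶ Q}
    (hq : IsCoinserterP u v q) {e : Y ⟶ E} {m : E ⟶ Q} (hem : e ≫ m = q)
    (he : u ≫ e ≤ v ≫ e) : ∃ t : Q ⟶ E, t ≫ m = 𝟙 Q := by
  obtain ⟨t, ht⟩ := hq.2.1 e he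
  have hqtm : q ≫ t ≫ m = q ≫ 𝟙 Q := by rw [← Category.assoc, ht, hem, Category.comp_id]
  exact ⟨t, le_antisymm (hq.2.2 _ _ hqtm.le) (hq.2.2 _ _ hqtm.ge)⟩

theorem IsCoinserterP.comp_iso {X Y Q Q' : C} {u v : X ⟶ Y} {q : Y ⟶ Q}
    (hq : IsCoinserterP u v q) (i : Q ≅ Q') : IsCoinserterP u v (q ≫ i.hom) := by
  refine ⟨?_, fun h huv => ?_, fun h h' hle => ?_⟩
  · simpa only [← Category.assoc] using comp_mono' hq.1 (le_refl i.hom)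
  · obtain ⟨t, ht⟩ := hq.2.1 h huv
    exact ⟨i.inv ≫ t, by simp [ht]⟩
  · have : q ≫ i.hom ≫ h ≤ q ≫ i.hom ≫ h' := by simpa only [Category.assoc] using hle
    simpa using comp_mono' (le_refl i.inv) (hq.2.2 _ _ this)

end PosEnr

open PosEnr Limits

instance : PosEnriched WalkingCospan where
  homOrder _ _ :=
    { le := fun _ _ => True
      le_refl := fun _ => trivial
      le_trans := fun _ _ _ _ _ => trivial
      le_antisymm := fun a b _ _ => Subsingleton.elim a b }
  comp_mono _ _ := trivial

namespace CospanWeight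

def commaObj : WalkingCospan → Type
  | none => Bool
  | some _ => PUnit

instance commaObjPartialOrder : ∀ d, PartialOrder (commaObj d)
  | none => inferInstanceAs (PartialOrder Bool)
  | some _ => inferInstanceAs (PartialOrder PUnit)

instance (d : WalkingCospan) : Finite (commaObj d) := by
  cases d <;> unfold commaObj <;> infer_instance

def commaMap : ∀ {d d' : WalkingCospan}, (d ⟶ d') → commaObj d → commaObj d'
  | none, none, _, x => x
  | some _, some _, _, _ => ⟨⟩
  | some .left, none, _, _ => false
  | some .right, none, _, _ => true
  | none, some _, h, _ => nomatch h

/-- The weight of comma objects: the apex of the cospan sees the arrow `false ≤ true`, whose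
ends are the images of the two legs. -/
def comma : PosWeight WalkingCospan where
  obj := commaObj
  po := commaObjPartialOrder
  map := commaMap
  map_monotone := by
    rintro (_ | (_ | _)) (_ | (_ | _)) f x y h <;> cases f using WidePullbackShape.Hom.casesOn <;>
      first | exact h | exact le_refl _
  map_id := by
    rintro (_ | (_ | _)) x <;> rfl
  map_comp := by
    rintro (_ | (_ | _)) (_ | (_ | _)) (_ | (_ | _)) f g x <;>
      cases f using WidePullbackShape.Hom.casesOn <;>
      cases g using WidePullbackShape.Hom.casesOn <;> rfl
  map_le := fun {_ _} {f g} _ _ => by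
    cases Subsingleton.elim f g; exact le_refl _

def conical : PosWeight WalkingCospan where
  obj _ := PUnit
  po _ := inferInstance
  map _ _ := ⟨⟩
  map_monotone _ _ _ _ := le_refl _
  map_id _ _ := rfl
  map_comp _ _ _ := rfl
  map_le _ _ := le_refl _

theorem comma_isFiniteWeight : comma.IsFiniteWeight :=
  ⟨inferInstance, fun _ _ => inferInstance, fun d => inferInstanceAs (Finite (commaObj d))⟩

theorem conical_isFiniteWeight : conical.IsFiniteWeight :=
  ⟨inferInstance, fun _ _ => inferInstance, fun _ => inferInstanceAs (Finite PUnit)⟩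

variable {C : Type u} [Category.{v} C] [PosEnriched C]

def diagram {X Y Z : C} (f : X ⟶ Z) (g : Y ⟶ Z) : PosFunctor WalkingCospan C where
  toFunctor := cospan f g
  map_le {_ _} {a b} _ := by cases Subsingleton.elim a b; exact le_refl _

def commaCylinder {X Y Z A : C} (f : X ⟶ Z) (g : Y ⟶ Z) (a : A ⟶ X) (b : A ⟶ Y)
    (hab : a ≫ f ≤ b ≫ g) : Cylinder comma (diagram f g) A where
  app d x :=
    match d, x with
    | none, false => a ≫ f
    | none, true => b ≫ g
    | some WalkingPair.left, _ => a
    | some WalkingPair.right, _ => b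
  monotone := by
    rintro (_ | (_ | _)) x y h
    · cases x <;> cases y
      · exact le_refl _
      · exact hab
      · exact absurd (h rfl) Bool.false_ne_true
      · exact le_refl _
    · exact le_refl _
    · exact le_refl _
  naturality := by
    rintro (_ | (_ | _)) (_ | (_ | _)) f x <;> cases f using WidePullbackShape.Hom.casesOn <;>
      first | rfl | exact Category.comp_id _

def conicalCylinder {X Y Z A : C} (f : X ⟶ Z) (g : Y ⟶ Z) (a : A ⟶ X) (b : A ⟶ Y)
    (hab : a ≫ f = b ≫ g) : Cylinder conical (diagram f g) A where
  app d _ :=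
    match d with
    | none => a ≫ f
    | some WalkingPair.left => a
    | some WalkingPair.right => b
  monotone _ _ _ _ := le_refl _
  naturality := by
    rintro (_ | (_ | _)) (_ | (_ | _)) f x <;> cases f using WidePullbackShape.Hom.casesOn <;>
      first | rfl | exact Category.comp_id _ | exact hab.symm

end CospanWeight

namespace WeaklyLex

open CospanWeight

variable {C : Type u} [Category.{v} C] [PosEnriched C]

theorem exists_isWeakCommaP (hC : WeaklyLex C) {X Y Z : C} (f : X ⟶ Z) (g : Y ⟶ Z) :
    ∃ (P : C) (c0 : P ⟶ X) (c1 : P ⟶ Y), IsWeakCommaP f g c0 c1 := by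
  obtain ⟨L, c, hc⟩ := hC WalkingCospan comma (diagram f g) comma_isFiniteWeight
  refine ⟨L, c.app (some .left) ⟨⟩, c.app (some .right) ⟨⟩, ?_, fun a b hab => ?_⟩
  · have hl : c.app (some .left) ⟨⟩ ≫ f = c.app none false :=
      c.naturality WalkingCospan.Hom.inl ⟨⟩
    have hr : c.app (some .right) ⟨⟩ ≫ g = c.app none true :=
      c.naturality WalkingCospan.Hom.inr ⟨⟩
    exact (hl.trans_le (c.monotone none false true (Bool.false_le true))).trans_eq hr.symm
  · obtain ⟨w, hw⟩ := hc _ (commaCylinder f g a b hab)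
    exact ⟨w, hw (some .left) ⟨⟩, hw (some .right) ⟨⟩⟩

theorem exists_isWeakPullbackP (hC : WeaklyLex C) {X Y Z : C} (f : X ⟶ Z) (g : Y ⟶ Z) :
    ∃ (P : C) (p0 : P ⟶ X) (p1 : P ⟶ Y), IsWeakPullbackP f g p0 p1 := by
  obtain ⟨L, c, hc⟩ := hC WalkingCospan conical (diagram f g) conical_isFiniteWeight
  refine ⟨L, c.app (some .left) ⟨⟩, c.app (some .right) ⟨⟩, ?_, fun a b hab => ?_⟩
  · exact (c.naturality WalkingCospan.Hom.inl ⟨⟩).trans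
      (c.naturality WalkingCospan.Hom.inr ⟨⟩).symm
  · obtain ⟨w, hw⟩ := hc _ (conicalCylinder f g a b hab)
    exact ⟨w, hw (some .left) ⟨⟩, hw (some .right) ⟨⟩⟩

theorem exists_isWeakInverseImage (hC : WeaklyLex C) {X V S : C} (f : X ⟶ V) (r0 r1 : S ⟶ V) :
    ∃ (L : C) (l0 l1 : L ⟶ X), IsWeakInverseImage f r0 r1 l0 l1 := by
  obtain ⟨Q, qa, qt, hq, hQ⟩ := exists_isWeakPullbackP hC f r0
  obtain ⟨L, m, l1, hm, hL⟩ := exists_isWeakPullbackP hC (qt ≫ r1) f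
  refine ⟨L, m ≫ qa, l1, ⟨m ≫ qt, by simp [hq], by simp [hm]⟩, ?_⟩
  rintro A a0 a1 ⟨t, ht0, ht1⟩
  obtain ⟨w, hwa, hwt⟩ := hQ a0 t ht0.symm
  obtain ⟨k, hkm, hk1⟩ := hL w a1 (by rw [← Category.assoc, hwt, ht1])
  exact ⟨k, by rw [← Category.assoc, hkm, hwa], hk1⟩

end WeaklyLex

namespace ExObj

variable {C : Type u} [Category.{v} C] [PosEnriched C]

abbrev Rel (B : ExObj C) {T : C} (a b : T ⟶ B.X) : Prop := SpanRel B.r0 B.r1 a b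

theorem rel_of_le (B : ExObj C) {T : C} {a b : T ⟶ B.X} (h : a ≤ b) : B.Rel a b :=
  B.orefl a b h

theorem Rel.trans {B : ExObj C} {T : C} {a b c : T ⟶ B.X} (hab : B.Rel a b) (hbc : B.Rel b c) :
    B.Rel a c := by
  obtain ⟨s, hs0, hs1⟩ := hab
  obtain ⟨t, ht0, ht1⟩ := hbc
  obtain ⟨w, hw0, hw1⟩ := B.tra s t (by rw [hs1, ht0])
  exact ⟨w, by rw [hw0, hs0], by rw [hw1, ht1]⟩

theorem rel_r0_r1 (B : ExObj C) : B.Rel B.r0 B.r1 :=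
  ⟨𝟙 B.R, Category.id_comp _, Category.id_comp _⟩

theorem compat_iff_rel {A B : ExObj C} {f : A.X ⟶ B.X} :
    Compat A B f ↔ B.Rel (A.r0 ≫ f) (A.r1 ≫ f) := Iff.rfl

theorem Compat.id (A : ExObj C) : Compat A A (𝟙 A.X) :=
  ⟨𝟙 A.R, by simp, by simp⟩

def Compat.hom {A B : ExObj C} {a : A.X ⟶ B.X} (h : Compat A B a) : A ⟶ B :=
  Quotient.mk (exSetoid A B) ⟨a, h⟩

theorem exists_compat_hom_eq {A B : ExObj C} (f : A ⟶ B) :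
    ∃ (a : A.X ⟶ B.X) (h : Compat A B a), h.hom = f := by
  obtain ⟨⟨a, h⟩, rfl⟩ := Quotient.exists_rep f
  exact ⟨a, h, rfl⟩

theorem Compat.hom_id (A : ExObj C) : (Compat.id A).hom = 𝟙 A := rfl

theorem Compat.hom_comp_hom {A B D : ExObj C} {a : A.X ⟶ B.X} {b : B.X ⟶ D.X}
    (ha : Compat A B a) (hb : Compat B D b) : ha.hom ≫ hb.hom = (ha.comp hb).hom := rfl

theorem Compat.hom_congr {A B : ExObj C} {a b : A.X ⟶ B.X} (hab : a = b) (ha : Compat A B a)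
    (hb : Compat A B b) : ha.hom = hb.hom := by
  subst hab; rfl

theorem Compat.hom_le_hom_iff {A B : ExObj C} {a b : A.X ⟶ B.X} (ha : Compat A B a)
    (hb : Compat A B b) : ha.hom ≤ hb.hom ↔ B.Rel a b := Iff.rfl

theorem Compat.hom_eq_hom_iff {A B : ExObj C} {a b : A.X ⟶ B.X} (ha : Compat A B a)
    (hb : Compat A B b) : ha.hom = hb.hom ↔ B.Rel a b ∧ B.Rel b a :=
  ⟨Quotient.exact, fun h => Quotient.sound h⟩

/-- `Γ X` as in `commaExObj`, built from a single weak comma object of `(𝟙 X, 𝟙 X)`. -/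
abbrev ofWeakComma (X : C) {I : C} (i0 i1 : I ⟶ X) (hI : IsWeakCommaP (𝟙 X) (𝟙 X) i0 i1) :
    ExObj C where
  X := X
  R := I
  r0 := i0
  r1 := i1
  orefl a0 a1 h := hI.2 a0 a1 (by simpa using h)
  tra u v huv := hI.2 _ _ <| by
    have hle : i0 ≤ i1 := by simpa using hI.1
    calc (u ≫ i0) ≫ 𝟙 X ≤ u ≫ i1 := by simpa using comp_mono' (le_refl u) hle
      _ = v ≫ i0 := huv
      _ ≤ (v ≫ i1) ≫ 𝟙 X := by simpa using comp_mono' (le_refl v) hle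

theorem compat_ofWeakComma {X I : C} {i0 i1 : I ⟶ X} (hI : IsWeakCommaP (𝟙 X) (𝟙 X) i0 i1)
    (B : ExObj C) (d : X ⟶ B.X) : Compat (ofWeakComma X i0 i1 hI) B d :=
  B.rel_of_le (comp_mono' (show i0 ≤ i1 by simpa using hI.1) (le_refl d))

/-- The pseudocongruence `f*Z` on `X`. -/
abbrev comap (Z : ExObj C) {X L : C} {f : X ⟶ Z.X} {l0 l1 : L ⟶ X}
    (hl : IsWeakInverseImage f Z.r0 Z.r1 l0 l1) : ExObj C where
  X := X
  R := L
  r0 := l0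
  r1 := l1
  orefl a0 a1 h := hl.2 a0 a1 (Z.rel_of_le (comp_mono' h (le_refl f)))
  tra u v huv := by
    have hu : Z.Rel ((u ≫ l0) ≫ f) ((u ≫ l1) ≫ f) := by
      simpa only [Category.assoc] using hl.1.precomp u
    have hv : Z.Rel ((u ≫ l1) ≫ f) ((v ≫ l1) ≫ f) := by
      simpa only [Category.assoc, huv] using hl.1.precomp v
    exact hl.2 _ _ (hu.trans hv)

variable {Z : ExObj C} {X L : C} {f : X ⟶ Z.X} {l0 l1 : L ⟶ X}

theorem rel_comap_iff (hl : IsWeakInverseImage f Z.r0 Z.r1 l0 l1) {T : C} {a b : T ⟶ X} :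
    (Z.comap hl).Rel a b ↔ Z.Rel (a ≫ f) (b ≫ f) := by
  refine ⟨fun h => ?_, hl.2 a b⟩
  obtain ⟨k, rfl, rfl⟩ := h
  simpa only [Category.assoc] using hl.1.precomp k

theorem compat_comap_self (hl : IsWeakInverseImage f Z.r0 Z.r1 l0 l1) :
    Compat (Z.comap hl) Z f :=
  hl.1

theorem compat_comap_id {Y : ExObj C} {f : Y.X ⟶ Z.X} {l0 l1 : L ⟶ Y.X}
    (hl : IsWeakInverseImage f Z.r0 Z.r1 l0 l1) (hf : Compat Y Z f) :
    Compat Y (Z.comap hl) (𝟙 Y.X) :=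
  compat_iff_rel.2 <| (rel_comap_iff hl).2 <| by simpa using compat_iff_rel.1 hf

theorem Compat.hom_comp_hom_comap {Y : ExObj C} {f : Y.X ⟶ Z.X} {l0 l1 : L ⟶ Y.X}
    (hl : IsWeakInverseImage f Z.r0 Z.r1 l0 l1) (hf : Compat Y Z f) :
    (compat_comap_id hl hf).hom ≫ (compat_comap_self hl).hom = hf.hom :=
  Compat.hom_congr (Category.id_comp f) _ _

theorem isCoinserterP_compat_comap_id {Y : ExObj C} {f : Y.X ⟶ Z.X} {l0 l1 : L ⟶ Y.X}
    (hl : IsWeakInverseImage f Z.r0 Z.r1 l0 l1) (hf : Compat Y Z f)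
    {I : C} {i0 i1 : I ⟶ L} (hI : IsWeakCommaP (𝟙 L) (𝟙 L) i0 i1) :
    IsCoinserterP (compat_ofWeakComma hI Y l0).hom (compat_ofWeakComma hI Y l1).hom
      (compat_comap_id hl hf).hom := by
  refine ⟨⟨𝟙 L, by simp, by simp⟩, fun h hle => ?_, fun h h' hle => ?_⟩
  · obtain ⟨h₀, _, rfl⟩ := exists_compat_hom_eq h
    exact ⟨Compat.hom hle, Compat.hom_congr (Category.id_comp h₀) _ _⟩
  · obtain ⟨h₀, _, rfl⟩ := exists_compat_hom_eq h
    obtain ⟨h₀', _, rfl⟩ := exists_compat_hom_eq h'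
    simpa only [Compat.hom_comp_hom, Compat.hom_le_hom_iff, Category.id_comp] using hle

def IsRelSection (Z : ExObj C) {X : C} (f : X ⟶ Z.X) (s : Z.X ⟶ X) : Prop :=
  Z.Rel (s ≫ f) (𝟙 Z.X) ∧ Z.Rel (𝟙 Z.X) (s ≫ f)

theorem IsRelSection.compat_comap (hl : IsWeakInverseImage f Z.r0 Z.r1 l0 l1) {s : Z.X ⟶ X}
    (hs : Z.IsRelSection f s) : Compat Z (Z.comap hl) s := by
  refine compat_iff_rel.2 <| (rel_comap_iff hl).2 ?_
  have h0 : Z.Rel (Z.r0 ≫ s ≫ f) Z.r0 := by simpa using hs.1.precomp Z.r0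
  have h1 : Z.Rel Z.r1 (Z.r1 ≫ s ≫ f) := by simpa using hs.2.precomp Z.r1
  simpa only [Category.assoc] using (h0.trans Z.rel_r0_r1).trans h1

def comapIso (hl : IsWeakInverseImage f Z.r0 Z.r1 l0 l1) {s : Z.X ⟶ X}
    (hs : Z.IsRelSection f s) : Z.comap hl ≅ Z where
  hom := (compat_comap_self hl).hom
  inv := (hs.compat_comap hl).hom
  hom_inv_id := by
    rw [Compat.hom_comp_hom, ← Compat.hom_id, Compat.hom_eq_hom_iff, rel_comap_iff hl,
      rel_comap_iff hl]
    simpa only [Category.assoc, Category.id_comp, Category.comp_id] using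
      And.intro (hs.1.precomp f) (hs.2.precomp f)
  inv_hom_id := by
    rw [Compat.hom_comp_hom, ← Compat.hom_id, Compat.hom_eq_hom_iff]
    exact hs

theorem effectiveEpiP_of_isRelSection (hC : WeaklyLex C) {Y Z : ExObj C} {f : Y.X ⟶ Z.X}
    (hf : Compat Y Z f) {s : Z.X ⟶ Y.X} (hs : Z.IsRelSection f s) : EffectiveEpiP hf.hom := by
  obtain ⟨L, l0, l1, hl⟩ := WeaklyLex.exists_isWeakInverseImage hC f Z.r0 Z.r1
  obtain ⟨I, i0, i1, hI⟩ := WeaklyLex.exists_isWeakCommaP hC (𝟙 L) (𝟙 L)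
  rw [← Compat.hom_comp_hom_comap hl hf]
  exact ⟨_, _, _, (isCoinserterP_compat_comap_id hl hf hI).comp_iso (comapIso hl hs)⟩

theorem exists_isRelSection_of_effectiveEpiP (hC : WeaklyLex C) {A Z : ExObj C}
    {f : A.X ⟶ Z.X} (hf : Compat A Z f) (h : EffectiveEpiP hf.hom) :
    ∃ s : Z.X ⟶ A.X, Z.IsRelSection f s := by
  obtain ⟨L, l0, l1, hl⟩ := WeaklyLex.exists_isWeakInverseImage hC f Z.r0 Z.r1
  obtain ⟨W, u, v, hq⟩ := h
  obtain ⟨u₀, hu, rfl⟩ := exists_compat_hom_eq u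
  obtain ⟨v₀, hv, rfl⟩ := exists_compat_hom_eq v
  have hle : hu.hom ≫ (compat_comap_id hl hf).hom ≤ hv.hom ≫ (compat_comap_id hl hf).hom := by
    rw [Compat.hom_comp_hom, Compat.hom_comp_hom, Compat.hom_le_hom_iff, rel_comap_iff hl]
    simpa only [Category.comp_id] using (Compat.hom_le_hom_iff _ _).1 hq.1
  obtain ⟨t, ht⟩ := hq.exists_section_of_fac (Compat.hom_comp_hom_comap hl hf) hle
  obtain ⟨s, _, rfl⟩ := exists_compat_hom_eq t
  rw [Compat.hom_comp_hom, ← Compat.hom_id, Compat.hom_eq_hom_iff] at ht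
  exact ⟨s, ht⟩

/-- Test the pullback square with `Γ B.X`, mapped to `A` by `g ≫ s` and to `B` by `𝟙`. -/
theorem exists_isRelSection_of_isPullbackP (hC : WeaklyLex C) {P A B Z : ExObj C}
    {f : A.X ⟶ Z.X} (hf : Compat A Z f) {g : B ⟶ Z} {p0 : P ⟶ A} {p : P.X ⟶ B.X}
    (hp : Compat P B p) (hpb : IsPullbackP hf.hom g p0 hp.hom) {s : Z.X ⟶ A.X}
    (hs : Z.IsRelSection f s) : ∃ t : B.X ⟶ P.X, B.IsRelSection p t := by
  obtain ⟨g₀, hg, rfl⟩ := exists_compat_hom_eq g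
  obtain ⟨I, i0, i1, hI⟩ := WeaklyLex.exists_isWeakCommaP hC (𝟙 B.X) (𝟙 B.X)
  have hsq : (compat_ofWeakComma hI A (g₀ ≫ s)).hom ≫ hf.hom =
      (compat_ofWeakComma hI B (𝟙 B.X)).hom ≫ hg.hom := by
    rw [Compat.hom_comp_hom, Compat.hom_comp_hom, Compat.hom_eq_hom_iff]
    simpa only [Category.assoc, Category.comp_id, Category.id_comp] using
      And.intro (hs.1.precomp g₀) (hs.2.precomp g₀)
  obtain ⟨σ, -, hσ⟩ := hpb.2.1 _ _ hsq
  obtain ⟨t, _, rfl⟩ := exists_compat_hom_eq σ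
  rw [Compat.hom_comp_hom, Compat.hom_eq_hom_iff] at hσ
  exact ⟨t, hσ⟩

end ExObj

/-- effective epimorphisms are stable under pullback in the exact
completion of a weakly lex `Pos`-category. -/
theorem statement8 {C : Type u} [Category.{v} C] [PosEnriched C] (hC : WeaklyLex C)
    {P A B Z : ExObj C} (f : A ⟶ Z) (g : B ⟶ Z) (p0 : P ⟶ A) (p1 : P ⟶ B)
    (hpb : PosEnr.IsPullbackP f g p0 p1) (hf : PosEnr.EffectiveEpiP f) :
    PosEnr.EffectiveEpiP p1 := by
  obtain ⟨f₀, hf₀, rfl⟩ := ExObj.exists_compat_hom_eq f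
  obtain ⟨p, hp, rfl⟩ := ExObj.exists_compat_hom_eq p1
  obtain ⟨s, hs⟩ := ExObj.exists_isRelSection_of_effectiveEpiP hC hf₀ hf
  obtain ⟨t, ht⟩ := ExObj.exists_isRelSection_of_isPullbackP hC hf₀ hp hpb hs
  exact ExObj.effectiveEpiP_of_isRelSection hC hp ht
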